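/- No theorem of the logics N, NeF, and CoPC is a negation: there is no formula φ such that the sequent (with empty antecedent) ⇒ ¬φ is derivable in the cut-free calculus G3-N, G3-NeF, or G3-CoPC. -/
import Mathlib


inductive Fml where
  | var : Nat → Fml
  | top : Fml
  | and : Fml → Fml → Fml
  | or  : Fml → Fml → Fml
  | imp : Fml → Fml → Fml
  | neg : Fml → Fml
deriving DecidableEq

/-- Names for the four possible negation rules. -/
inductive NegRule where
  | n | nef | copc | an
deriving DecidableEq

/-- `Der R Γ φ k`: the sequent `Γ ⇒ φ` is derivable with height at most `k`
in the G3 calculus whose negation rules are those satisfying `R`.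
Axioms are available at every height; each rule adds one to the height. -/
inductive Der (R : NegRule → Prop) : Multiset Fml → Fml → Nat → Prop where
  | ax (Γ : Multiset Fml) (p k) : Der R (Fml.var p ::ₘ Γ) (Fml.var p) k
  | top (Γ : Multiset Fml) (k) : Der R Γ Fml.top k
  | andR {Γ α β k} : Der R Γ α k → Der R Γ β k → Der R Γ (Fml.and α β) (k+1)
  | andL {Γ α β φ k} : Der R (α ::ₘ β ::ₘ Γ) φ k → Der R (Fml.and α β ::ₘ Γ) φ (k+1)
  | orR1 {Γ α β k} : Der R Γ α k → Der R Γ (Fml.or α β) (k+1)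
  | orR2 {Γ α β k} : Der R Γ β k → Der R Γ (Fml.or α β) (k+1)
  | orL {Γ α β φ k} : Der R (α ::ₘ Γ) φ k → Der R (β ::ₘ Γ) φ k →
      Der R (Fml.or α β ::ₘ Γ) φ (k+1)
  | impR {Γ α β k} : Der R (α ::ₘ Γ) β k → Der R Γ (Fml.imp α β) (k+1)
  | impL {Γ α β φ k} : Der R (Fml.imp α β ::ₘ Γ) α k → Der R (β ::ₘ Γ) φ k →
      Der R (Fml.imp α β ::ₘ Γ) φ (k+1)
  | nrule {Γ α β k} : R NegRule.n → Der R (β ::ₘ Fml.neg α ::ₘ Γ) α k →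
      Der R (α ::ₘ Fml.neg α ::ₘ Γ) β k → Der R (Fml.neg α ::ₘ Γ) (Fml.neg β) (k+1)
  | nef {Γ α β k} : R NegRule.nef → Der R (Fml.neg α ::ₘ Γ) α k →
      Der R (Fml.neg α ::ₘ Γ) (Fml.neg β) (k+1)
  | copc {Γ α β k} : R NegRule.copc → Der R (β ::ₘ Fml.neg α ::ₘ Γ) α k →
      Der R (Fml.neg α ::ₘ Γ) (Fml.neg β) (k+1)
  | an {Γ α k} : R NegRule.an → Der R (α ::ₘ Γ) (Fml.neg α) k → Der R Γ (Fml.neg α) (k+1)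

/-- The calculus G3-N. -/
def NCalc : NegRule → Prop := fun r => r = NegRule.n
/-- The calculus G3-NeF. -/
def NeFCalc : NegRule → Prop := fun r => r = NegRule.nef
/-- The calculus G3-CoPC. -/
def CoPCCalc : NegRule → Prop := fun r => r = NegRule.copc
/-- The calculus G3-MPC (contraposition plus (AN)). -/
def MPCCalc : NegRule → Prop := fun r => r = NegRule.copc ∨ r = NegRule.an

/-- Derivability (at some height). -/
def Derivable (R : NegRule → Prop) (Γ : Multiset Fml) (φ : Fml) : Prop := ∃ k, Der R Γ φ k

lemma no_neg_empty' {R : NegRule → Prop} (hA : ¬ R NegRule.an) (φ : Fml) (k : Nat)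
    (Γ : Multiset Fml) (hΓ : Γ = 0) : ¬ Der R Γ (Fml.neg φ) k := by
  intro h
  cases h <;> first
    | exact hA ‹_›
    | simp_all

lemma no_neg_empty {R : NegRule → Prop} (hA : ¬ R NegRule.an) (φ : Fml) (k : Nat) :
    ¬ Der R 0 (Fml.neg φ) k := no_neg_empty' hA φ k 0 rfl

/-- No theorem of N, NeF or CoPC is a negation. -/
theorem no_negated_theorems :
    ∀ φ : Fml,
      ¬ Derivable NCalc 0 (Fml.neg φ) ∧ ¬ Derivable NeFCalc 0 (Fml.neg φ) ∧
      ¬ Derivable CoPCCalc 0 (Fml.neg φ) := by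
  intro φ
  refine ⟨fun ⟨k, h⟩ => ?_, fun ⟨k, h⟩ => ?_, fun ⟨k, h⟩ => ?_⟩ <;>
    exact no_neg_empty (by simp [NCalc, NeFCalc, CoPCCalc]) φ k h
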